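/- Define the sequence of genus polynomials gₙ ∈ ℤ[Y] as the sum of the four entries of Mⁿ⁻¹·v for n ≥ 1, where v = (2, 0, 0, 2Y)ᵀ. Then for all n ≥ 1, gₙ₊₄ = (16Y + 1)·gₙ₊₃ + 16Y·gₙ₊₂ − (512Y³ − 64Y²)·gₙ₊₁ − 1024Y⁴·gₙ. -/
import Mathlib


open Polynomial Matrix

/-- The indeterminate `Y` of `ℤ[Y]`. -/
noncomputable def Y : Polynomial ℤ := Polynomial.X

/-- The reduced transfer matrix for the genus distribution of doubly hexagonal chains. -/
noncomputable def M : Matrix (Fin 4) (Fin 4) (Polynomial ℤ) :=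
  !![1, 2, 4, 8;
     8*Y, 8*Y, 8*Y, 0;
     2*Y, 4*Y, 0, 0;
     4*Y^2 + Y, 2*Y, 4*Y, 8*Y]

/-- The initial vector, the stratified genus distribution of `D₁`. -/
noncomputable def v : Fin 4 → Polynomial ℤ := ![2, 0, 0, 2*Y]

/-- The genus polynomial of the doubly hexagonal chain `Dₙ`. -/
noncomputable def g (n : ℕ) : Polynomial ℤ := ∑ i, (M ^ (n - 1)).mulVec v i

set_option maxHeartbeats 2000000 in
lemma cayley :
    M ^ 4 = (16 * Y + 1) • M ^ 3 + (16 * Y) • M ^ 2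
      - (512 * Y ^ 3 - 64 * Y ^ 2) • M
      - (1024 * Y ^ 4) • (1 : Matrix (Fin 4) (Fin 4) (Polynomial ℤ)) := by
  have h4 : M ^ 4 = M * M * M * M := by rw [pow_succ, pow_succ, pow_succ, pow_one]
  have h3 : M ^ 3 = M * M * M := by rw [pow_succ, pow_succ, pow_one]
  rw [h4, h3, sq]
  refine Matrix.ext fun i j => ?_
  fin_cases i <;> fin_cases j <;>
    simp [M, Matrix.mul_apply, Fin.sum_univ_succ, Matrix.one_apply] <;> ring

theorem genus_polynomial_recurrence :
    ∀ n : ℕ, 1 ≤ n →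
      g (n + 4) = (16 * Y + 1) * g (n + 3) + (16 * Y) * g (n + 2)
        - (512 * Y ^ 3 - 64 * Y ^ 2) * g (n + 1) - (1024 * Y ^ 4) * g n := by
  rintro n hn
  obtain ⟨m, rfl⟩ := Nat.exists_eq_add_of_le hn
  simp only [g]
  have e : ∀ k : ℕ, 1 + m + k - 1 = m + k := by omega
  rw [e 4, e 3, e 2, e 1, show 1 + m - 1 = m + 0 by omega]
  have key : ∀ k : ℕ, M ^ (m + k) = M ^ m * M ^ k := pow_add M m
  rw [key 4, key 3, key 2, key 1, key 0, cayley]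
  simp only [mul_add, mul_sub, Matrix.mul_smul, mul_one, pow_zero, mul_one,
    Matrix.sub_mulVec, Matrix.add_mulVec, Matrix.smul_mulVec,
    Pi.add_apply, Pi.sub_apply, Pi.smul_apply, smul_eq_mul,
    Finset.sum_add_distrib, Finset.sum_sub_distrib, ← Finset.mul_sum]
  ring_nf
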